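/- arXiv:2006.05067 — 5 statements merged into one kernel-verified Lean document; each statement's English description precedes it below -/
import Mathlib

section
/- Let w : Fin N → ℝ be utility scores and define the Plackett-Luce probability of a full ranking (i_1,...,i_N) as the product over j of exp(w_{i_j}) / Σ_{l≥j} exp(w_{i_l}). Given a partitioned preference S_1 ≻ S_2 ≻ ⋯ ≻ S_M (disjoint sets whose union is {1,...,N}), the probability of observing the partitioned preference, i.e., the sum of PL probabilities over all full rankings consistent with the partition order, equals the product over m = 1,...,M-1 of P(S_m ≻ R_{m+1}), where R_{m+1} = S_{m+1} ∪ ⋯ ∪ S_M and P(A ≻ B) denotes the sum of PL probabilities of orderings of A∪B in which every element of A precedes every element of B (with PL scores restricted appropriately). -/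
open scoped Classical

/-- Plackett-Luce probability of an ordered list of items under scores `w`:
the product over positions of `exp(w i) / (sum of exp-scores of remaining items)`. -/
noncomputable def PLlist {N : ℕ} (w : Fin N → ℝ) : List (Fin N) → ℝ
  | [] => 1
  | i :: t =>
      (Real.exp (w i) / (((i :: t).map fun j => Real.exp (w j)).sum)) * PLlist w t

/-- A full ranking (list) is consistent with the partitioned preference
`S 0 ≻ S 1 ≻ ⋯` if every item of an earlier partition appears before
every item of a later partition. -/
def consistent {N M : ℕ} (S : Fin M → Finset (Fin N)) (l : List (Fin N)) : Prop :=
  ∀ m m' : Fin M, m < m' → ∀ i ∈ S m, ∀ j ∈ S m', l.idxOf i < l.idxOf j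

/-- `P(A ≻ B)`: the sum of Plackett-Luce probabilities (with scores restricted to
`A ∪ B`) of all orderings of `A ∪ B` in which every element of `A` precedes
every element of `B`. -/
noncomputable def PsuccProb {N : ℕ} (w : Fin N → ℝ) (A B : Finset (Fin N)) : ℝ :=
  (A.toList.permutations.map fun la =>
    (B.toList.permutations.map fun lb => PLlist w (la ++ lb)).sum).sum

/-!
Write the partition as the fibres of a map `f : Fin N → Fin M`. A ranking is consistent exactly
when `f` is monotone along it, so the consistent rankings are the concatenations
`l₀ ++ l₁ ++ ⋯` of orderings `lₘ` of the blocks. The Plackett-Luce probability factors along a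
concatenation, `PL(l ++ l') = PLprefix (mass l') l * PL(l')`, because the later items enter the
denominators of the first factors only through their total mass. So the sum over consistent
rankings is a product over blocks, and since `PL` sums to `1` over the orderings of any set, the
`m`-th factor is `P(Sₘ ≻ Rₘ₊₁)`; for the last block `Rₘ₊₁ = ∅` and the factor is `1`.
-/

open Finset

section Orderings

variable {α : Type*} [DecidableEq α]

noncomputable def orderings (A : Finset α) : Finset (List α) :=
  A.toList.permutations.toFinset

theorem List.Nodup.perm_iff_toFinset_eq {l L : List α} (hL : L.Nodup) :
    l.Perm L ↔ l.Nodup ∧ l.toFinset = L.toFinset :=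
  ⟨fun h => ⟨h.nodup_iff.2 hL, List.toFinset_eq_of_perm _ _ h⟩,
    fun h => List.perm_of_nodup_nodup_toFinset_eq h.1 hL h.2⟩

theorem mem_orderings {A : Finset α} {l : List α} :
    l ∈ orderings A ↔ l.Nodup ∧ l.toFinset = A := by
  rw [orderings, List.mem_toFinset, List.mem_permutations,
    A.nodup_toList.perm_iff_toFinset_eq, Finset.toList_toFinset]

theorem mem_iff_of_mem_orderings {A : Finset α} {l : List α} (hl : l ∈ orderings A) {x : α} :
    x ∈ l ↔ x ∈ A := by
  rw [← (mem_orderings.1 hl).2, List.mem_toFinset]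

theorem sum_permutations_eq_sum_orderings {β : Type*} [AddCommMonoid β] {L : List α}
    (hL : L.Nodup) (F : List α → β) :
    (L.permutations.map F).sum = ∑ l ∈ orderings L.toFinset, F l := by
  rw [← List.sum_toFinset F (List.nodup_permutations L hL)]
  congr 1
  ext l
  rw [mem_orderings, List.mem_toFinset, List.mem_permutations, hL.perm_iff_toFinset_eq]

theorem sum_map_eq_sum_of_mem_orderings {β : Type*} [AddCommMonoid β] {A : Finset α}
    {l : List α} (hl : l ∈ orderings A) (f : α → β) :
    (l.map f).sum = ∑ i ∈ A, f i := by
  obtain ⟨hnd, rfl⟩ := mem_orderings.1 hl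
  exact (List.sum_toFinset f hnd).symm

theorem sum_orderings_eq_sum_sum_cons {β : Type*} [AddCommMonoid β] {A : Finset α}
    (hA : A.Nonempty) (F : List α → β) :
    ∑ l ∈ orderings A, F l = ∑ i ∈ A, ∑ t ∈ orderings (A.erase i), F (i :: t) := by
  rw [sum_sigma']
  refine (sum_bij (fun p _ => p.1 :: p.2) ?_ ?_ ?_ fun _ _ => rfl).symm
  · rintro ⟨i, t⟩ h
    obtain ⟨hi, ht⟩ := mem_sigma.1 h
    have hit : i ∉ t := fun h => by simpa using (mem_iff_of_mem_orderings ht).1 h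
    refine mem_orderings.2 ⟨List.nodup_cons.2 ⟨hit, (mem_orderings.1 ht).1⟩, ?_⟩
    rw [List.toFinset_cons, (mem_orderings.1 ht).2, insert_erase hi]
  · rintro ⟨i, t⟩ _ ⟨j, s⟩ _ h
    obtain ⟨rfl, rfl⟩ := List.cons.inj h
    rfl
  · rintro (_ | ⟨i, t⟩) hl <;> obtain ⟨hnd, hlA⟩ := mem_orderings.1 hl
    · simp [← hlA] at hA
    · have hit := List.nodup_cons.1 hnd
      refine ⟨⟨i, t⟩, mem_sigma.2 ⟨by simp [← hlA], mem_orderings.2 ⟨hit.2, ?_⟩⟩, rfl⟩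
      rw [← hlA, List.toFinset_cons, erase_insert (by simpa using hit.1)]

end Orderings

section PlackettLuce

variable {N : ℕ} (w : Fin N → ℝ)

/-- The probability that a Plackett-Luce ranking starts with `l` when the items outside `l` have
total weight `c`. -/
noncomputable def PLprefix (c : ℝ) : List (Fin N) → ℝ
  | [] => 1
  | i :: t => Real.exp (w i) / (c + ((i :: t).map fun j => Real.exp (w j)).sum) * PLprefix c t

theorem PLprefix_zero : PLprefix w 0 = PLlist w := by
  funext l
  induction l with
  | nil => rfl
  | cons i t ih => simp [PLprefix, PLlist, ih]

theorem PLlist_append (l₁ l₂ : List (Fin N)) :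
    PLlist w (l₁ ++ l₂) = PLprefix w (l₂.map fun j => Real.exp (w j)).sum l₁ * PLlist w l₂ := by
  induction l₁ with
  | nil => simp [PLprefix]
  | cons i t ih =>
    simp only [List.cons_append, PLlist, PLprefix, ih, List.map_cons, List.map_append,
      List.sum_cons, List.sum_append]
    ring

theorem sum_orderings_PLlist (A : Finset (Fin N)) : ∑ l ∈ orderings A, PLlist w l = 1 := by
  induction A using Finset.strongInduction with
  | H A ih =>
    rcases A.eq_empty_or_nonempty with rfl | hA
    · simp [orderings, PLlist]
    have hfirst : ∀ i ∈ A, ∀ t ∈ orderings (A.erase i),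
        PLlist w (i :: t) = Real.exp (w i) / (∑ j ∈ A, Real.exp (w j)) * PLlist w t := by
      intro i hi t ht
      rw [PLlist, List.map_cons, List.sum_cons, sum_map_eq_sum_of_mem_orderings ht,
        add_sum_erase A (fun j => Real.exp (w j)) hi]
    calc ∑ l ∈ orderings A, PLlist w l
        = ∑ i ∈ A, Real.exp (w i) / ∑ j ∈ A, Real.exp (w j) := by
          rw [sum_orderings_eq_sum_sum_cons hA]
          refine sum_congr rfl fun i hi => ?_
          rw [sum_congr rfl (hfirst i hi), ← mul_sum, ih _ (erase_ssubset hi), mul_one]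
      _ = 1 := by
          rw [← sum_div, div_self (sum_pos (fun i _ => Real.exp_pos (w i)) hA).ne']

theorem PsuccProb_eq_sum_orderings (A B : Finset (Fin N)) :
    PsuccProb w A B = ∑ l ∈ orderings A, PLprefix w (∑ i ∈ B, Real.exp (w i)) l := by
  rw [PsuccProb, sum_permutations_eq_sum_orderings A.nodup_toList, toList_toFinset]
  refine sum_congr rfl fun la _ => ?_
  rw [sum_permutations_eq_sum_orderings B.nodup_toList, toList_toFinset]
  calc ∑ lb ∈ orderings B, PLlist w (la ++ lb)
      = ∑ lb ∈ orderings B, PLprefix w (∑ i ∈ B, Real.exp (w i)) la * PLlist w lb :=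
        sum_congr rfl fun lb hlb => by rw [PLlist_append, sum_map_eq_sum_of_mem_orderings hlb]
    _ = _ := by rw [← mul_sum, sum_orderings_PLlist, mul_one]

theorem PsuccProb_empty (A : Finset (Fin N)) : PsuccProb w A ∅ = 1 := by
  rw [PsuccProb_eq_sum_orderings, sum_empty, PLprefix_zero, sum_orderings_PLlist]

theorem PLlist_flatMap_finRange {M : ℕ} (g : Fin M → List (Fin N)) :
    PLlist w ((List.finRange M).flatMap g) =
      ∏ m, PLprefix w (∑ m' ∈ Ioi m, ((g m').map fun j => Real.exp (w j)).sum) (g m) := by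
  induction M with
  | zero => simp [PLlist]
  | succ M ih =>
    rw [List.finRange_succ, List.flatMap_cons, List.flatMap_map, PLlist_append, ih,
      Fin.prod_univ_succ, Fin.sum_Ioi_zero]
    simp_rw [Fin.sum_Ioi_succ]
    congr 2
    simp [Fin.sum_univ_def, List.flatMap_def, List.sum_flatten, Function.comp_def]

end PlackettLuce

section Blocks

variable {α ι : Type*}

theorem List.filter_append_filter_not_of_pairwise (p : α → Bool) {l : List α}
    (hl : l.Pairwise fun x y => p y → p x) : l.filter p ++ l.filter (fun x => !p x) = l := by
  induction l with
  | nil => rfl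
  | cons x t ih =>
    rw [List.pairwise_cons] at hl
    by_cases hx : p x
    · simp [hx, ih hl.2]
    · have hnil : t.filter p = [] :=
        List.filter_eq_nil_iff.2 fun y hy hpy => hx (hl.1 y hy hpy)
      simpa [List.filter_cons, hx, hnil] using ih hl.2

theorem List.flatMap_filter_eq_self [Preorder ι] [DecidableEq ι] {f : α → ι} {L : List ι}
    (hL : L.Pairwise (· < ·)) {l : List α} (hl : l.Pairwise fun x y => f x ≤ f y)
    (hfL : ∀ x ∈ l, f x ∈ L) : L.flatMap (fun b => l.filter (f · = b)) = l := by
  induction L generalizing l with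
  | nil => simpa [List.eq_nil_iff_forall_not_mem] using hfL
  | cons b L ih =>
    rw [List.pairwise_cons] at hL
    have hrest : ∀ b' ∈ L,
        l.filter (f · = b') = (l.filter fun x => !(f x = b)).filter (f · = b') := by
      intro b' hb'
      rw [List.filter_filter]
      refine List.filter_congr fun x _ => ?_
      by_cases h : f x = b' <;> simp [h, (hL.1 b' hb').ne']
    rw [List.flatMap_cons, List.flatMap_congr hrest, ih hL.2 (hl.filter _)]
    · refine List.filter_append_filter_not_of_pairwise _ (hl.imp_of_mem fun hx _ hxy hy => ?_)
      simp only [decide_eq_true_eq] at hy ⊢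
      rcases List.mem_cons.1 (hfL _ hx) with h | h
      · exact h
      · exact absurd (hy ▸ hxy) (hL.1 _ h).not_ge
    · intro x hx
      rw [List.mem_filter] at hx
      exact (List.mem_cons.1 (hfL x hx.1)).resolve_left (by simpa using hx.2)

theorem List.filter_flatMap_eq_of_mem [DecidableEq ι] {f : α → ι} {g : ι → List α}
    (hg : ∀ b, ∀ x ∈ g b, f x = b) {L : List ι} (hL : L.Nodup) {b : ι} (hb : b ∈ L) :
    (L.flatMap g).filter (f · = b) = g b := by
  induction L with
  | nil => simp at hb
  | cons a L ih =>
    rw [List.nodup_cons] at hL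
    rw [List.flatMap_cons, List.filter_append]
    by_cases hab : a = b
    · subst hab
      rw [List.filter_eq_self.2 (by simpa using hg a), List.filter_eq_nil_iff.2, List.append_nil]
      simp only [List.mem_flatMap, decide_eq_true_eq]
      rintro x ⟨b', hb', hx⟩ rfl
      exact hL.1 (hg b' x hx ▸ hb')
    · rw [List.filter_eq_nil_iff.2 fun x hx => by simpa [hg a x hx] using hab,
        ih hL.2 ((List.mem_cons.1 hb).resolve_left (Ne.symm hab)), List.nil_append]

theorem List.Nodup.pairwise_iff_idxOf_lt [DecidableEq α] {R : α → α → Prop} {l : List α}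
    (hl : l.Nodup) :
    l.Pairwise R ↔ ∀ x ∈ l, ∀ y ∈ l, l.idxOf x < l.idxOf y → R x y := by
  rw [List.pairwise_iff_getElem]
  constructor
  · intro h x hx y hy hxy
    simpa only [List.getElem_idxOf] using
      h _ _ (List.idxOf_lt_length_iff.2 hx) (List.idxOf_lt_length_iff.2 hy) hxy
  · intro h i j hi hj hij
    refine h _ (List.getElem_mem _) _ (List.getElem_mem _) ?_
    rwa [hl.idxOf_getElem, hl.idxOf_getElem]

end Blocks

section Partition

def fiber {α ι : Type*} [Fintype α] [DecidableEq ι] (f : α → ι) (b : ι) : Finset α :=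
  univ.filter (f · = b)

@[simp]
theorem mem_fiber {α ι : Type*} [Fintype α] [DecidableEq ι] {f : α → ι} {b : ι} {x : α} :
    x ∈ fiber f b ↔ f x = b := by
  simp [fiber]

theorem exists_eq_fiber {α ι : Type*} [Fintype α] [Fintype ι] [DecidableEq α] [DecidableEq ι]
    {S : ι → Finset α} (hdisj : ∀ m m', m ≠ m' → Disjoint (S m) (S m'))
    (hcover : univ.biUnion S = univ) : ∃ f : α → ι, S = fiber f := by
  have hex : ∀ i, ∃ m, i ∈ S m := fun i => by
    simpa using (hcover.symm ▸ mem_univ i : i ∈ univ.biUnion S)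
  choose f hf using hex
  refine ⟨f, funext fun m => ext fun i => ?_⟩
  rw [mem_fiber]
  exact ⟨fun hi => by_contra fun h => disjoint_left.1 (hdisj _ _ h) (hf i) hi, fun h => h ▸ hf i⟩

variable {N M : ℕ} {f : Fin N → Fin M}

theorem apply_eq_of_mem_orderings_fiber {b : Fin M} {l : List (Fin N)}
    (hl : l ∈ orderings (fiber f b)) {x : Fin N} (hx : x ∈ l) : f x = b :=
  mem_fiber.1 ((mem_iff_of_mem_orderings hl).1 hx)

theorem consistent_fiber_iff_pairwise {l : List (Fin N)} (hl : l.Nodup) (hmem : ∀ i, i ∈ l) :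
    consistent (fiber f) l ↔ l.Pairwise fun x y => f x ≤ f y := by
  rw [hl.pairwise_iff_idxOf_lt]
  constructor
  · intro h x _ y _ hxy
    by_contra hyx
    exact (h _ _ (not_le.1 hyx) y (by simp) x (by simp)).asymm hxy
  · intro h _ _ hmm' i hi j hj
    rw [mem_fiber] at hi hj
    subst hi hj
    rcases lt_trichotomy (l.idxOf i) (l.idxOf j) with hij | hij | hij
    · exact hij
    · rw [List.idxOf_inj (hmem i)] at hij
      exact absurd (hij ▸ hmm') (lt_irrefl _)
    · exact absurd (h j (hmem j) i (hmem i) hij) (not_le.2 hmm')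

theorem flatMap_finRange_mem_orderings_univ {g : Fin M → List (Fin N)}
    (hg : ∀ m, g m ∈ orderings (fiber f m)) : (List.finRange M).flatMap g ∈ orderings univ := by
  refine mem_orderings.2 ⟨List.nodup_flatMap.2 ⟨fun m _ => (mem_orderings.1 (hg m)).1, ?_⟩, ?_⟩
  · refine (List.pairwise_lt_finRange M).imp fun hmm' x hx hx' => hmm'.ne ?_
    rw [← apply_eq_of_mem_orderings_fiber (hg _) hx, apply_eq_of_mem_orderings_fiber (hg _) hx']
  · refine eq_univ_of_forall fun i => List.mem_toFinset.2 (List.mem_flatMap.2 ?_)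
    exact ⟨f i, List.mem_finRange _, (mem_iff_of_mem_orderings (hg _)).2 (mem_fiber.2 rfl)⟩

theorem consistent_fiber_flatMap_finRange {g : Fin M → List (Fin N)}
    (hg : ∀ m, g m ∈ orderings (fiber f m)) :
    consistent (fiber f) ((List.finRange M).flatMap g) := by
  obtain ⟨hnd, hall⟩ := mem_orderings.1 (flatMap_finRange_mem_orderings_univ hg)
  rw [consistent_fiber_iff_pairwise hnd fun i => by simp [← List.mem_toFinset, hall],
    List.pairwise_flatMap]
  refine ⟨fun m _ => List.pairwise_of_forall_mem_list fun x hx y hy => ?_,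
    (List.pairwise_lt_finRange M).imp fun hmm' x hx y hy => ?_⟩
  · rw [apply_eq_of_mem_orderings_fiber (hg m) hx, apply_eq_of_mem_orderings_fiber (hg m) hy]
  · rw [apply_eq_of_mem_orderings_fiber (hg _) hx, apply_eq_of_mem_orderings_fiber (hg _) hy]
    exact hmm'.le

theorem sum_consistent_fiber_eq_sum_piFinset {β : Type*} [AddCommMonoid β] (f : Fin N → Fin M)
    (F : List (Fin N) → β) :
    ∑ l ∈ (orderings univ).filter (consistent (fiber f)), F l =
      ∑ g ∈ Fintype.piFinset fun m => orderings (fiber f m), F ((List.finRange M).flatMap g) := by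
  refine (sum_nbij' (fun g => (List.finRange M).flatMap g) (fun l m => l.filter (f · = m))
    ?_ ?_ ?_ ?_ fun _ _ => rfl).symm
  · intro g hg
    rw [Fintype.mem_piFinset] at hg
    exact mem_filter.2
      ⟨flatMap_finRange_mem_orderings_univ hg, consistent_fiber_flatMap_finRange hg⟩
  · intro l hl
    obtain ⟨hl, -⟩ := mem_filter.1 hl
    refine Fintype.mem_piFinset.2 fun m => mem_orderings.2 ⟨(mem_orderings.1 hl).1.filter _, ?_⟩
    ext x
    simp [mem_iff_of_mem_orderings hl]
  · intro g hg
    rw [Fintype.mem_piFinset] at hg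
    funext m
    exact List.filter_flatMap_eq_of_mem (fun b _ => apply_eq_of_mem_orderings_fiber (hg b))
      (List.nodup_finRange M) (List.mem_finRange m)
  · intro l hl
    obtain ⟨hl, hcons⟩ := mem_filter.1 hl
    have hsorted := (consistent_fiber_iff_pairwise (mem_orderings.1 hl).1
      fun i => (mem_iff_of_mem_orderings hl).2 (mem_univ i)).1 hcons
    exact List.flatMap_filter_eq_self (List.pairwise_lt_finRange M) hsorted
      fun x _ => List.mem_finRange _

theorem sum_consistent_fiber_PLlist_eq_prod_PsuccProb (w : Fin N → ℝ) (f : Fin N → Fin M) :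
    ∑ l ∈ (orderings univ).filter (consistent (fiber f)), PLlist w l =
      ∏ m, PsuccProb w (fiber f m) ((univ.filter fun r => m < r).biUnion (fiber f)) := by
  have hmass : ∀ g ∈ Fintype.piFinset (fun m => orderings (fiber f m)), ∀ m : Fin M,
      ∑ m' ∈ Ioi m, ((g m').map fun j => Real.exp (w j)).sum =
        ∑ i ∈ (univ.filter fun r => m < r).biUnion (fiber f), Real.exp (w i) := by
    intro g hg m
    rw [sum_biUnion fun a _ b _ hab => disjoint_left.2 fun i ha hb =>
      hab ((mem_fiber.1 ha).symm.trans (mem_fiber.1 hb)), filter_lt_eq_Ioi]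
    exact sum_congr rfl fun m' _ =>
      sum_map_eq_sum_of_mem_orderings (Fintype.mem_piFinset.1 hg m') _
  simp_rw [PsuccProb_eq_sum_orderings, prod_univ_sum, sum_consistent_fiber_eq_sum_piFinset,
    PLlist_flatMap_finRange]
  exact sum_congr rfl fun g hg => prod_congr rfl fun m _ => by rw [hmass g hg m]

end Partition

theorem partitioned_preference_prob_eq_prod_general
    {N M : ℕ} (w : Fin N → ℝ) (S : Fin M → Finset (Fin N))
    (hdisj : ∀ m m' : Fin M, m ≠ m' → Disjoint (S m) (S m'))
    (hcover : Finset.univ.biUnion S = (Finset.univ : Finset (Fin N))) :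
    ((List.finRange N).permutations.map fun l =>
        if consistent S l then PLlist w l else 0).sum =
      ∏ m ∈ Finset.univ.filter (fun m : Fin M => (m : ℕ) < M - 1),
        PsuccProb w (S m)
          ((Finset.univ.filter fun r : Fin M => m < r).biUnion S) := by
  obtain ⟨f, rfl⟩ := exists_eq_fiber hdisj hcover
  rw [sum_permutations_eq_sum_orderings (List.nodup_finRange N), List.toFinset_finRange,
    ← sum_filter, sum_consistent_fiber_PLlist_eq_prod_PsuccProb]
  refine (prod_subset (filter_subset _ _) fun m _ hm => ?_).symm
  have hlast : (univ.filter fun r => m < r) = ∅ := by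
    refine filter_eq_empty_iff.2 fun r _ hr => hm (mem_filter.2 ⟨mem_univ m, ?_⟩)
    have := r.isLt
    rw [Fin.lt_def] at hr
    omega
  rw [hlast, biUnion_empty, PsuccProb_empty]

/-- The probability of observing the partitioned preference
`S 1 ≻ ⋯ ≻ S M` (sum of PL probabilities over all consistent full rankings)
equals `∏_{m=1}^{M-1} P(S m ≻ R (m+1))` where `R (m+1) = ∪_{r > m} S r`. -/
theorem partitioned_preference_prob_eq_prod
    {N M : ℕ} (hM : 1 ≤ M) (w : Fin N → ℝ) (S : Fin M → Finset (Fin N))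
    (hdisj : ∀ m m' : Fin M, m ≠ m' → Disjoint (S m) (S m'))
    (hcover : Finset.univ.biUnion S = (Finset.univ : Finset (Fin N)))
    (hne : ∀ m : Fin M, (S m).Nonempty) :
    ((List.finRange N).permutations.map fun l =>
        if consistent S l then PLlist w l else 0).sum =
      ∏ m ∈ Finset.univ.filter (fun m : Fin M => (m : ℕ) < M - 1),
        PsuccProb w (S m)
          ((Finset.univ.filter fun r : Fin M => m < r).biUnion S) :=
  partitioned_preference_prob_eq_prod_general w S hdisj hcover
end

section
/- Let (g_i)_{i=1}^N be independent random variables with g_i ~ Gumbel(w_i) (CDF F_i(x) = exp(−exp(−(x − w_i)))). Then for any permutation (i_1,...,i_N) of {1,...,N}, P(g_{i_1} > g_{i_2} > ⋯ > g_{i_N}) = ∏_{j=1}^N exp(w_{i_j}) / Σ_{k=j}^N exp(w_{i_k}). -/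
/-!
With `λ = exp w`, the Gumbel(w) density is `λ e^{-x} exp(-λ e^{-x})`. Reweighting it by
`exp(-S e^{-x})`, the probability that independent Gumbels of total weight `S` all lie below `x`,
gives `λ / (λ + S)` times the Gumbel(log (λ + S)) law. Conditioning on the largest variable,
induction on `n` then yields `P(g₀ > ⋯ > gₙ₋₁, g₀ < t) = PL(w) · exp(-(∑ λᵢ) e^{-t})`, and `t → ∞`
gives the Plackett-Luce probability. Independence identifies the joint law of the `g (σ j)` with
the product of their Gumbel laws.
-/

open MeasureTheory ProbabilityTheory

/-- The Gumbel distribution with location parameter `w`: the measure on `ℝ`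
with CDF `x ↦ exp(−exp(−(x − w)))`, given here by its density
`x ↦ exp(−(x−w)) · exp(−exp(−(x−w)))` with respect to Lebesgue measure. -/
noncomputable def gumbel (w : ℝ) : Measure ℝ :=
  volume.withDensity fun x =>
    ENNReal.ofReal (Real.exp (-(x - w)) * Real.exp (-Real.exp (-(x - w))))

open Real Set Filter Topology

lemma hasDerivAt_gumbel_cdf (w x : ℝ) :
    HasDerivAt (fun x => exp (-exp (-(x - w))))
      (exp (-(x - w)) * exp (-exp (-(x - w)))) x := by
  convert ((hasDerivAt_id' x).sub_const w).neg.exp.neg.exp using 1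
  · ext; simp
  · simp only [neg_sub, Pi.neg_apply, mul_neg, mul_one, neg_neg]; ring

lemma tendsto_gumbel_cdf_atBot (w : ℝ) :
    Tendsto (fun x => exp (-exp (-(x - w)))) atBot (𝓝 0) :=
  tendsto_exp_atBot.comp <| tendsto_neg_atTop_atBot.comp <| tendsto_exp_atTop.comp <|
    tendsto_neg_atBot_atTop.comp <| tendsto_atBot_add_const_right _ (-w) tendsto_id

lemma integrableOn_gumbel_pdf_Iic (w t : ℝ) :
    IntegrableOn (fun x => exp (-(x - w)) * exp (-exp (-(x - w)))) (Iic t) := by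
  have hcont : Continuous fun x => exp (-(x - w)) * exp (-exp (-(x - w))) := by fun_prop
  refine integrableOn_Iic_of_intervalIntegral_norm_bounded 1 t
    (fun _ => hcont.integrableOn_Ioc) tendsto_id ?_
  filter_upwards [eventually_le_atBot t] with a hat
  have hnorm : ∀ x, ‖exp (-(x - w)) * exp (-exp (-(x - w)))‖ =
      exp (-(x - w)) * exp (-exp (-(x - w))) := fun x => Real.norm_of_nonneg (by positivity)
  simp only [id, hnorm]
  rw [intervalIntegral.integral_eq_sub_of_hasDerivAt (fun x _ => hasDerivAt_gumbel_cdf w x)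
    (hcont.intervalIntegrable _ _)]
  have h1 : exp (-exp (-(t - w))) ≤ 1 := exp_le_one_iff.2 (neg_nonpos.2 (exp_pos _).le)
  linarith [exp_pos (-exp (-(a - w)))]

theorem gumbel_Iio (w t : ℝ) : gumbel w (Iio t) = ENNReal.ofReal (exp (-exp (-(t - w)))) := by
  rw [gumbel, withDensity_apply _ measurableSet_Iio, Measure.restrict_congr_set Iio_ae_eq_Iic,
    ← ofReal_integral_eq_lintegral_ofReal (integrableOn_gumbel_pdf_Iic w t)
      (ae_of_all _ fun x => by positivity),
    integral_Iic_of_hasDerivAt_of_tendsto' (fun x _ => hasDerivAt_gumbel_cdf w x)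
      (integrableOn_gumbel_pdf_Iic w t) (tendsto_gumbel_cdf_atBot w), sub_zero]

instance (w : ℝ) : SigmaFinite (gumbel w) := SigmaFinite.withDensity_ofReal _

theorem withDensity_gumbel_exp (w : ℝ) {S : ℝ} (hS : 0 ≤ S) :
    (gumbel w).withDensity (fun x => ENNReal.ofReal (exp (-S * exp (-x)))) =
      ENNReal.ofReal (exp w / (exp w + S)) • gumbel (log (exp w + S)) := by
  have hc : 0 < exp w + S := by positivity
  rw [gumbel, gumbel, ← withDensity_mul _ (by fun_prop) (by fun_prop),
    ← withDensity_smul _ (by fun_prop)]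
  congr 1
  funext x
  simp only [Pi.mul_apply, Pi.smul_apply, smul_eq_mul]
  rw [← ENNReal.ofReal_mul (by positivity), ← ENNReal.ofReal_mul (by positivity)]
  congr 1
  have e1 : exp (-(x - w)) = exp w * exp (-x) := by rw [← exp_add]; ring_nf
  have e2 : exp (-(x - log (exp w + S))) = (exp w + S) * exp (-x) := by
    rw [sub_eq_add_neg, neg_add, neg_neg, exp_add, exp_log hc]; ring
  calc exp (-(x - w)) * exp (-exp (-(x - w))) * exp (-S * exp (-x))
      = exp w * exp (-x) * exp (-(exp w * exp (-x)) + -S * exp (-x)) := by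
        rw [e1, exp_add]; ring
    _ = exp w / (exp w + S) * (exp (-(x - log (exp w + S))) *
          exp (-exp (-(x - log (exp w + S))))) := by
        rw [e2]; field_simp; ring_nf

lemma Fin.strictAnti_cons_iff {α : Type*} [Preorder α] {n : ℕ} (a : α) (y : Fin n → α) :
    StrictAnti (Fin.cons a y : Fin (n + 1) → α) ↔ (∀ i, y i < a) ∧ StrictAnti y := by
  simp [StrictAnti, Fin.forall_fin_succ]

lemma measurableSet_setOf_strictAnti {ι α : Type*} [Countable ι] [Preorder ι] [LinearOrder α]
    [TopologicalSpace α] [OrderClosedTopology α] [SecondCountableTopology α] [MeasurableSpace α]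
    [OpensMeasurableSpace α] : MeasurableSet {x : ι → α | StrictAnti x} := by
  simp only [StrictAnti, ofPred_forall]
  exact .iInter fun j => .iInter fun k => .iInter fun _ =>
    measurableSet_lt (measurable_pi_apply k) (measurable_pi_apply j)

lemma MeasureTheory.Measure.pi_apply_eq_lintegral_cons {n : ℕ} {α : Type*}
    [MeasurableSpace α] (μ : Fin (n + 1) → Measure α) [∀ i, SigmaFinite (μ i)]
    {s : Set (Fin (n + 1) → α)} (hs : MeasurableSet s) :
    Measure.pi μ s = ∫⁻ a, Measure.pi (fun i => μ i.succ) {y | Fin.cons a y ∈ s} ∂μ 0 := by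
  rw [← (measurePreserving_piFinSuccAbove μ 0).symm.measure_preimage hs.nullMeasurableSet,
    Measure.prod_apply (hs.preimage (MeasurableEquiv.measurable _))]
  simp only [Fin.zero_succAbove, MeasurableEquiv.piFinSuccAbove_symm_apply, Fin.insertNthEquiv,
    Fin.insertNth_zero', Equiv.coe_fn_mk]
  rfl

noncomputable def plackettLuce {n : ℕ} (w : Fin n → ℝ) : ℝ :=
  ∏ j : Fin n, exp (w j) / ∑ k ∈ Finset.univ.filter (fun k : Fin n => j ≤ k), exp (w k)

lemma plackettLuce_succ {n : ℕ} (w : Fin (n + 1) → ℝ) :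
    plackettLuce w = exp (w 0) / (∑ k, exp (w k)) * plackettLuce (fun i => w i.succ) := by
  rw [plackettLuce, plackettLuce, Fin.prod_univ_succ]
  congr 1
  · simp
  · refine Finset.prod_congr rfl fun j _ => ?_
    simp [Finset.sum_filter, Fin.sum_univ_succ, Fin.succ_ne_zero]

lemma plackettLuce_nonneg {n : ℕ} (w : Fin n → ℝ) : 0 ≤ plackettLuce w := by
  unfold plackettLuce; positivity

lemma strictAnti_cons_and_lt_iff {α : Type*} [Preorder α] {n : ℕ} (a t : α)
    (y : Fin n → α) :
    (StrictAnti (Fin.cons a y : Fin (n + 1) → α) ∧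
        ∀ i, (Fin.cons a y : Fin (n + 1) → α) i < t) ↔
      a < t ∧ StrictAnti y ∧ ∀ i, y i < a := by
  simp only [Fin.strictAnti_cons_iff, Fin.forall_fin_succ, Fin.cons_zero, Fin.cons_succ]
  exact ⟨fun ⟨⟨hya, hy⟩, hat, _⟩ => ⟨hat, hy, hya⟩,
    fun ⟨hat, hy, hya⟩ => ⟨⟨hya, hy⟩, hat, fun i => (hya i).trans hat⟩⟩

theorem setLIntegral_gumbel_Iio_exp (w t : ℝ) {S : ℝ} (hS : 0 ≤ S) :
    ∫⁻ a in Iio t, ENNReal.ofReal (exp (-S * exp (-a))) ∂gumbel w =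
      ENNReal.ofReal (exp w / (exp w + S) * exp (-(exp w + S) * exp (-t))) := by
  have hc : 0 < exp w + S := by positivity
  rw [← withDensity_apply _ measurableSet_Iio, withDensity_gumbel_exp w hS, Measure.smul_apply,
    gumbel_Iio, smul_eq_mul, ← ENNReal.ofReal_mul (by positivity), sub_eq_add_neg, neg_add,
    neg_neg, exp_add, exp_log hc]
  ring_nf

theorem pi_gumbel_strictAnti_lt {n : ℕ} (w : Fin n → ℝ) (t : ℝ) :
    Measure.pi (fun i => gumbel (w i)) {x | StrictAnti x ∧ ∀ i, x i < t} =
      ENNReal.ofReal (plackettLuce w * exp (-(∑ i, exp (w i)) * exp (-t))) := by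
  induction n generalizing t with
  | zero => simp [plackettLuce, StrictAnti]
  | succ n ih =>
    have hS : 0 ≤ ∑ i : Fin n, exp (w i.succ) := by positivity
    have hs : MeasurableSet {x : Fin (n + 1) → ℝ | StrictAnti x ∧ ∀ i, x i < t} :=
      measurableSet_setOf_strictAnti.inter
        (MeasurableSet.univ_pi' fun _ => measurableSet_Iio)
    have hsection : ∀ a, Measure.pi (fun i : Fin n => gumbel (w i.succ))
        {y | (Fin.cons a y : Fin (n + 1) → ℝ) ∈ {x | StrictAnti x ∧ ∀ i, x i < t}} =
          (Iio t).indicator (fun a => Measure.pi (fun i : Fin n => gumbel (w i.succ))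
            {y | StrictAnti y ∧ ∀ i, y i < a}) a := by
      intro a
      by_cases ha : a < t <;> simp [ha, strictAnti_cons_and_lt_iff]
    calc Measure.pi (fun i => gumbel (w i)) {x | StrictAnti x ∧ ∀ i, x i < t}
        = ∫⁻ a in Iio t, Measure.pi (fun i : Fin n => gumbel (w i.succ))
            {y | StrictAnti y ∧ ∀ i, y i < a} ∂gumbel (w 0) := by
          rw [Measure.pi_apply_eq_lintegral_cons _ hs, ← lintegral_indicator measurableSet_Iio]
          simp_rw [hsection]
      _ = ENNReal.ofReal (plackettLuce (fun i => w i.succ)) * ∫⁻ a in Iio t,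
            ENNReal.ofReal (exp (-(∑ i : Fin n, exp (w i.succ)) * exp (-a))) ∂gumbel (w 0) := by
          simp_rw [ih, ENNReal.ofReal_mul (plackettLuce_nonneg _)]
          exact lintegral_const_mul _ (by fun_prop)
      _ = _ := by
          rw [setLIntegral_gumbel_Iio_exp _ _ hS, ← ENNReal.ofReal_mul (plackettLuce_nonneg _),
            plackettLuce_succ, Fin.sum_univ_succ]
          congr 1
          ring

theorem pi_gumbel_strictAnti {n : ℕ} (w : Fin n → ℝ) :
    Measure.pi (fun i => gumbel (w i)) {x | StrictAnti x} = ENNReal.ofReal (plackettLuce w) := by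
  set s : ℕ → Set (Fin n → ℝ) := fun m => {x | StrictAnti x ∧ ∀ i, x i < m}
  have hmono : Monotone s := fun m m' hm x ⟨hx, hxm⟩ =>
    ⟨hx, fun i => (hxm i).trans_le (Nat.cast_le.2 hm)⟩
  have hunion : ⋃ m, s m = {x | StrictAnti x} := by
    ext x
    simp only [s, mem_iUnion, mem_ofPred_eq, exists_and_left, and_iff_left_iff_imp]
    obtain ⟨b, hb⟩ := (finite_range x).bddAbove
    obtain ⟨m, hm⟩ := exists_nat_gt b
    exact fun _ => ⟨m, fun i => (hb (mem_range_self i)).trans_lt hm⟩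
  have hlim : Tendsto (fun m : ℕ => ENNReal.ofReal
      (plackettLuce w * exp (-(∑ i, exp (w i)) * exp (-(m : ℝ))))) atTop
      (𝓝 (ENNReal.ofReal (plackettLuce w))) := by
    have h0 : Tendsto (fun m : ℕ => exp (-(m : ℝ))) atTop (𝓝 0) :=
      tendsto_exp_neg_atTop_nhds_zero.comp tendsto_natCast_atTop_atTop
    have hcont : Continuous fun u : ℝ =>
        ENNReal.ofReal (plackettLuce w * exp (-(∑ i, exp (w i)) * u)) :=
      ENNReal.continuous_ofReal.comp (by fun_prop)
    simpa [Function.comp_def] using (hcont.tendsto 0).comp h0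
  have hlim' := tendsto_measure_iUnion_atTop (μ := Measure.pi fun i => gumbel (w i)) hmono
  rw [hunion] at hlim'
  refine tendsto_nhds_unique hlim' ?_
  simpa only [Function.comp_def, s, pi_gumbel_strictAnti_lt] using hlim

theorem gumbel_ranking_prob_eq_PL_general
    {Ω : Type*} [MeasureSpace Ω]
    {N : ℕ} (w : Fin N → ℝ) (g : Fin N → Ω → ℝ)
    (hmeas : ∀ i, Measurable (g i))
    (hindep : iIndepFun g ℙ)
    (hdist : ∀ i, Measure.map (g i) ℙ = gumbel (w i))
    (σ : Equiv.Perm (Fin N)) :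
    ℙ {ω | ∀ j k : Fin N, j < k → g (σ k) ω < g (σ j) ω} =
      ENNReal.ofReal
        (∏ j : Fin N,
          Real.exp (w (σ j)) /
            ∑ k ∈ Finset.univ.filter (fun k : Fin N => j ≤ k),
              Real.exp (w (σ k))) := by
  have hmap :
      Measure.map (fun ω j => g (σ j) ω) ℙ = Measure.pi fun j => gumbel (w (σ j)) := by
    rw [(hindep.precomp σ.injective).map_fun_eq_pi_map fun j => (hmeas (σ j)).aemeasurable]
    simp only [hdist]
  rw [← plackettLuce, ← pi_gumbel_strictAnti, ← hmap,
    Measure.map_apply (by fun_prop) measurableSet_setOf_strictAnti]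
  rfl

/-- If `g i ~ Gumbel(w i)` independently, then for any permutation `σ` of the items,
`P(g (σ 1) > g (σ 2) > ⋯ > g (σ N))` is the Plackett-Luce probability
`∏_j exp(w (σ j)) / Σ_{k ≥ j} exp(w (σ k))`. -/
theorem gumbel_ranking_prob_eq_PL
    {Ω : Type*} [MeasureSpace Ω] [IsProbabilityMeasure (ℙ : Measure Ω)]
    {N : ℕ} (w : Fin N → ℝ) (g : Fin N → Ω → ℝ)
    (hmeas : ∀ i, Measurable (g i))
    (hindep : iIndepFun g ℙ)
    (hdist : ∀ i, Measure.map (g i) ℙ = gumbel (w i))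
    (σ : Equiv.Perm (Fin N)) :
    ℙ {ω | ∀ j k : Fin N, j < k → g (σ k) ω < g (σ j) ω} =
      ENNReal.ofReal
        (∏ j : Fin N,
          Real.exp (w (σ j)) /
            ∑ k ∈ Finset.univ.filter (fun k : Fin N => j ≤ k),
              Real.exp (w (σ k))) :=
  gumbel_ranking_prob_eq_PL_general w g hmeas hindep hdist σ
end

section
/- Let (g_i)_{i∈A∪B} be independent with g_i ~ Gumbel(w_i), where A and B are finite disjoint nonempty sets. Then P(min_{a∈A} g_a > max_{b∈B} g_b) = ∫_0^1 ∏_{a∈A} (1 − u^{exp(w_a − w_B)}) du, where w_B = log Σ_{b∈B} exp(w_b). -/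
open MeasureTheory ProbabilityTheory

/-!
Write `F_v = gumbelCDF v`. The maximum `Y` of the `g b`, `b ∈ B`, has CDF `∏ b, F_{w b} = F_{w_B}`,
so it is `Gumbel(w_B)`. The minimum `X` of the `g a`, `a ∈ A`, is independent of `Y` and satisfies
`P(X > y) = ∏ a, (1 - F_{w a} y)`. Since `F_{w a} = F_{w_B} ^ exp (w a - w_B)`, conditioning on `Y`
gives `P(Y < X) = E[∏ a, (1 - U ^ exp (w a - w_B))]` with `U = F_{w_B} Y`, which is uniform on
`(0, 1)`.
-/

open Set Filter Topology

theorem withDensity_ofReal_Iic_of_hasDerivAt {F f : ℝ → ℝ}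
    (hderiv : ∀ x, HasDerivAt F (f x) x) (hf : Continuous f) (hf_nonneg : ∀ x, 0 ≤ f x)
    (hF : Tendsto F atBot (𝓝 0)) (t : ℝ) :
    volume.withDensity (fun x => ENNReal.ofReal (f x)) (Iic t) = ENNReal.ofReal (F t) := by
  have hIoc : ∀ a ≤ t, volume.withDensity (fun x => ENNReal.ofReal (f x)) (Ioc a t) =
      ENNReal.ofReal (F t - F a) := by
    intro a hat
    rw [withDensity_apply _ measurableSet_Ioc, ← ofReal_integral_eq_lintegral_ofReal
      hf.integrableOn_Ioc (ae_of_all _ hf_nonneg), ← intervalIntegral.integral_of_le hat,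
      intervalIntegral.integral_eq_sub_of_hasDerivAt (fun x _ => hderiv x)
        (hf.intervalIntegrable a t)]
  refine tendsto_nhds_unique (tendsto_measure_Ioc_atBot _ t) ?_
  have hlim : Tendsto (fun a => ENNReal.ofReal (F t - F a)) atBot
      (𝓝 (ENNReal.ofReal (F t))) := by
    simpa using ENNReal.tendsto_ofReal (hF.const_sub (F t))
  refine hlim.congr' ?_
  filter_upwards [eventually_le_atBot t] with a ha using (hIoc a ha).symm

noncomputable def gumbelCDF (w x : ℝ) : ℝ := Real.exp (-Real.exp (-(x - w)))

theorem gumbelCDF_pos (w x : ℝ) : 0 < gumbelCDF w x := Real.exp_pos _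

theorem gumbelCDF_lt_one (w x : ℝ) : gumbelCDF w x < 1 :=
  Real.exp_lt_one_iff.mpr (neg_lt_zero.mpr (Real.exp_pos _))

theorem gumbelCDF_strictMono (w : ℝ) : StrictMono (gumbelCDF w) := fun x y hxy => by
  unfold gumbelCDF
  gcongr

@[fun_prop]
theorem continuous_gumbelCDF (w : ℝ) : Continuous (gumbelCDF w) := by
  unfold gumbelCDF
  fun_prop

theorem hasDerivAt_gumbelCDF (w x : ℝ) :
    HasDerivAt (gumbelCDF w) (Real.exp (-(x - w)) * Real.exp (-Real.exp (-(x - w)))) x := by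
  have h := (((hasDerivAt_id' x).sub_const w).fun_neg.exp.fun_neg).exp
  rw [mul_neg_one, neg_neg, mul_comm] at h
  exact h

theorem tendsto_gumbelCDF_atBot (w : ℝ) : Tendsto (gumbelCDF w) atBot (𝓝 0) :=
  Real.tendsto_exp_atBot.comp <| tendsto_neg_atTop_atBot.comp <| Real.tendsto_exp_atTop.comp <|
    tendsto_neg_atBot_atTop.comp <| tendsto_atBot_add_const_right _ (-w) tendsto_id

theorem tendsto_gumbelCDF_atTop (w : ℝ) : Tendsto (gumbelCDF w) atTop (𝓝 1) := by
  have h : Tendsto (fun x => Real.exp (-(x - w))) atTop (𝓝 0) :=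
    Real.tendsto_exp_atBot.comp <| tendsto_neg_atTop_atBot.comp <|
      tendsto_atTop_add_const_right _ (-w) tendsto_id
  rw [show (1 : ℝ) = Real.exp (-0) by simp]
  exact (Real.continuous_exp.tendsto _).comp h.neg

theorem gumbelCDF_rpow (v w x : ℝ) : gumbelCDF v x ^ Real.exp (w - v) = gumbelCDF w x := by
  rw [gumbelCDF, gumbelCDF, Real.rpow_def_of_pos (Real.exp_pos _), Real.log_exp, neg_mul,
    ← Real.exp_add]
  ring_nf

theorem prod_gumbelCDF {ι : Type*} (w : ι → ℝ) {B : Finset ι} (hB : B.Nonempty) (x : ℝ) :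
    ∏ b ∈ B, gumbelCDF (w b) x = gumbelCDF (Real.log (∑ b ∈ B, Real.exp (w b))) x := by
  have hS : 0 < ∑ b ∈ B, Real.exp (w b) := Finset.sum_pos (fun b _ => Real.exp_pos _) hB
  simp only [gumbelCDF, ← Real.exp_sum, neg_sub, Real.exp_sub, Real.exp_log hS,
    Finset.sum_neg_distrib, Finset.sum_div]

theorem gumbelCDF_sub_log_neg_log {w t : ℝ} (ht0 : 0 < t) (ht1 : t < 1) :
    gumbelCDF w (w - Real.log (-Real.log t)) = t := by
  have : 0 < -Real.log t := neg_pos.mpr (Real.log_neg ht0 ht1)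
  simp only [gumbelCDF, sub_sub_cancel_left, neg_neg, Real.exp_log this, Real.exp_log ht0]

theorem gumbelCDF_preimage_Iic {w t : ℝ} (ht0 : 0 < t) (ht1 : t < 1) :
    gumbelCDF w ⁻¹' Iic t = Iic (w - Real.log (-Real.log t)) := by
  have hq := gumbelCDF_sub_log_neg_log (w := w) ht0 ht1
  ext x
  simp only [mem_preimage, mem_Iic]
  conv_lhs => rw [← hq]
  exact (gumbelCDF_strictMono w).le_iff_le

theorem gumbel_Iic (w t : ℝ) : gumbel w (Iic t) = ENNReal.ofReal (gumbelCDF w t) :=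
  withDensity_ofReal_Iic_of_hasDerivAt (hasDerivAt_gumbelCDF w) (by fun_prop)
    (fun _ => by positivity) (tendsto_gumbelCDF_atBot w) t

instance (w : ℝ) : IsProbabilityMeasure (gumbel w) := by
  refine ⟨tendsto_nhds_unique (tendsto_measure_Iic_atTop _) ?_⟩
  simp_rw [gumbel_Iic]
  simpa using ENNReal.tendsto_ofReal (tendsto_gumbelCDF_atTop w)

theorem gumbel_Ioi (w t : ℝ) : gumbel w (Ioi t) = ENNReal.ofReal (1 - gumbelCDF w t) := by
  rw [← compl_Iic, prob_compl_eq_one_sub measurableSet_Iic, gumbel_Iic, ← ENNReal.ofReal_one,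
    ENNReal.ofReal_sub _ (gumbelCDF_pos w t).le]

theorem map_gumbelCDF_gumbel (w : ℝ) :
    (gumbel w).map (gumbelCDF w) = volume.restrict (Ioo 0 1) := by
  have : IsProbabilityMeasure (volume.restrict (Ioo (0 : ℝ) 1)) := ⟨by simp⟩
  refine Measure.ext_of_Iic _ _ fun t => ?_
  rw [Measure.map_apply (continuous_gumbelCDF w).measurable measurableSet_Iic,
    Measure.restrict_apply measurableSet_Iic]
  rcases le_or_gt t 0 with ht0 | ht0
  · have hpre : gumbelCDF w ⁻¹' Iic t = ∅ :=
      eq_empty_of_forall_notMem fun x hx => (gumbelCDF_pos w x).not_ge (hx.out.trans ht0)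
    have hinter : Iic t ∩ Ioo 0 1 = ∅ := by
      ext x; simp only [mem_inter_iff, mem_Iic, mem_Ioo, mem_empty_iff_false]; grind
    simp [hpre, hinter]
  rcases lt_or_ge t 1 with ht1 | ht1
  · have hinter : Iic t ∩ Ioo 0 1 = Ioc 0 t := by
      ext x; simp only [mem_inter_iff, mem_Iic, mem_Ioo, mem_Ioc]; grind
    rw [gumbelCDF_preimage_Iic ht0 ht1, gumbel_Iic, hinter, Real.volume_Ioc, sub_zero,
      gumbelCDF_sub_log_neg_log ht0 ht1]
  · have hpre : gumbelCDF w ⁻¹' Iic t = univ :=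
      eq_univ_of_forall fun x => (gumbelCDF_lt_one w x).le.trans ht1
    have hinter : Iic t ∩ Ioo 0 1 = Ioo 0 1 := by
      ext x; simp only [mem_inter_iff, mem_Iic, mem_Ioo]; grind
    simp [hpre, hinter]

theorem setLIntegral_Ioo_ofReal_eq_intervalIntegral {f : ℝ → ℝ} {a b : ℝ} (hab : a ≤ b)
    (hf : IntervalIntegrable f volume a b) (hf_nonneg : ∀ x ∈ Ioo a b, 0 ≤ f x) :
    ∫⁻ x in Ioo a b, ENNReal.ofReal (f x) = ENNReal.ofReal (∫ x in a..b, f x) := by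
  rw [intervalIntegral.integral_of_le hab, integral_Ioc_eq_integral_Ioo,
    ofReal_integral_eq_lintegral_ofReal ((intervalIntegrable_iff_integrableOn_Ioo_of_le hab).1 hf)
      (ae_restrict_of_forall_mem measurableSet_Ioo hf_nonneg)]

section Lattice

variable {ι α : Type*} {s : Finset ι}

theorem Finset.measurable_sup'_apply {δ : Type*} [MeasurableSpace δ] [MeasurableSpace α]
    [SemilatticeSup α] [MeasurableSup₂ α] {f : ι → δ → α} (hs : s.Nonempty)
    (hf : ∀ i ∈ s, Measurable (f i)) : Measurable fun x => s.sup' hs (f · x) := by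
  convert Finset.measurable_sup' hs hf with x
  exact (Finset.sup'_apply hs f x).symm

theorem Finset.measurable_inf'_apply {δ : Type*} [MeasurableSpace δ] [MeasurableSpace α]
    [SemilatticeInf α] [MeasurableInf₂ α] {f : ι → δ → α} (hs : s.Nonempty)
    (hf : ∀ i ∈ s, Measurable (f i)) : Measurable fun x => s.inf' hs (f · x) := by
  convert Finset.inf'_induction hs f (fun _ hf _ hg => hf.inf hg) hf with x
  exact (Finset.inf'_apply hs f x).symm

theorem Finset.sup'_attach [SemilatticeSup α] (hs : s.Nonempty) (f : ι → α) :
    s.attach.sup' hs.attach (fun i => f i) = s.sup' hs f :=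
  (Finset.sup'_comp_eq_map f hs.attach (f := Function.Embedding.subtype _)).trans
    (Finset.sup'_congr _ Finset.attach_map_val fun _ _ => rfl)

theorem Finset.inf'_attach [SemilatticeInf α] (hs : s.Nonempty) (f : ι → α) :
    s.attach.inf' hs.attach (fun i => f i) = s.inf' hs f :=
  (Finset.inf'_comp_eq_map f hs.attach (f := Function.Embedding.subtype _)).trans
    (Finset.inf'_congr _ Finset.attach_map_val fun _ _ => rfl)

end Lattice

namespace ProbabilityTheory

variable {Ω ι β : Type*} {mΩ : MeasurableSpace Ω} {μ : Measure Ω} {g : ι → Ω → β}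
  [MeasurableSpace β]

theorem iIndepFun.indepFun_sup'_inf' [Lattice β] [MeasurableSup₂ β] [MeasurableInf₂ β]
    (hg : iIndepFun g μ) (hmeas : ∀ i, Measurable (g i)) {A B : Finset ι} (hAB : Disjoint A B)
    (hA : A.Nonempty) (hB : B.Nonempty) :
    IndepFun (fun ω => A.sup' hA (g · ω)) (fun ω => B.inf' hB (g · ω)) μ := by
  have hφ : Measurable fun v : A → β => A.attach.sup' hA.attach fun i => v i :=
    Finset.measurable_sup'_apply _ fun i _ => measurable_pi_apply i
  have hψ : Measurable fun v : B → β => B.attach.inf' hB.attach fun i => v i :=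
    Finset.measurable_inf'_apply _ fun i _ => measurable_pi_apply i
  convert (hg.indepFun_finset A B hAB hmeas).comp hφ hψ using 1
  · exact funext fun ω => (Finset.sup'_attach hA _).symm
  · exact funext fun ω => (Finset.inf'_attach hB _).symm

section LinearOrder

variable [LinearOrder β] [TopologicalSpace β] [OrderClosedTopology β] [OpensMeasurableSpace β]

theorem iIndepFun.measure_sup'_le (hg : iIndepFun g μ) {B : Finset ι} (hB : B.Nonempty) (t : β) :
    μ {ω | B.sup' hB (g · ω) ≤ t} = ∏ b ∈ B, μ {ω | g b ω ≤ t} := by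
  have h : {ω | B.sup' hB (g · ω) ≤ t} = ⋂ b ∈ B, g b ⁻¹' Iic t := by
    ext ω
    simp [Finset.sup'_le_iff]
  rw [h, hg.measure_inter_preimage_eq_mul B fun _ _ => measurableSet_Iic]
  rfl

theorem iIndepFun.measure_lt_inf' (hg : iIndepFun g μ) {A : Finset ι} (hA : A.Nonempty) (t : β) :
    μ {ω | t < A.inf' hA (g · ω)} = ∏ a ∈ A, μ {ω | t < g a ω} := by
  have h : {ω | t < A.inf' hA (g · ω)} = ⋂ a ∈ A, g a ⁻¹' Ioi t := by
    ext ω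
    simp [Finset.lt_inf'_iff]
  rw [h, hg.measure_inter_preimage_eq_mul A fun _ _ => measurableSet_Ioi]
  rfl

theorem IndepFun.measure_lt_eq_lintegral [SecondCountableTopology β] [IsFiniteMeasure μ]
    {X Y : Ω → β} (hXY : IndepFun Y X μ) (hY : Measurable Y) (hX : Measurable X) :
    μ {ω | Y ω < X ω} = ∫⁻ y, μ {ω | y < X ω} ∂μ.map Y := by
  have hlt : MeasurableSet {p : β × β | p.1 < p.2} :=
    measurableSet_lt measurable_fst measurable_snd
  calc μ {ω | Y ω < X ω} = μ.map (fun ω => (Y ω, X ω)) {p | p.1 < p.2} :=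
        (Measure.map_apply (hY.prodMk hX) hlt).symm
    _ = (μ.map Y).prod (μ.map X) {p | p.1 < p.2} := by
        rw [(indepFun_iff_map_prod_eq_prod_map_map hY.aemeasurable hX.aemeasurable).1 hXY]
    _ = ∫⁻ y, μ.map X {x | y < x} ∂μ.map Y := Measure.prod_apply hlt
    _ = ∫⁻ y, μ {ω | y < X ω} ∂μ.map Y :=
        lintegral_congr fun y => Measure.map_apply hX measurableSet_Ioi

end LinearOrder

theorem iIndepFun.map_sup'_eq_gumbel {g : ι → Ω → ℝ}
    (hg : iIndepFun g μ) (hmeas : ∀ i, Measurable (g i)) (w : ι → ℝ) {B : Finset ι}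
    (hB : B.Nonempty) (hdist : ∀ b ∈ B, μ.map (g b) = gumbel (w b)) :
    μ.map (fun ω => B.sup' hB (g · ω)) = gumbel (Real.log (∑ b ∈ B, Real.exp (w b))) := by
  have hY := Finset.measurable_sup'_apply hB fun b _ => hmeas b
  have := hg.isProbabilityMeasure
  refine Measure.ext_of_Iic _ _ fun t => ?_
  rw [Measure.map_apply hY measurableSet_Iic, gumbel_Iic, ← prod_gumbelCDF w hB,
    ENNReal.ofReal_prod_of_nonneg fun b _ => (gumbelCDF_pos _ _).le]
  refine (hg.measure_sup'_le hB t).trans (Finset.prod_congr rfl fun b hb => ?_)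
  rw [← gumbel_Iic, ← hdist b hb, Measure.map_apply (hmeas b) measurableSet_Iic]
  rfl

theorem iIndepFun.measure_lt_inf'_eq_gumbel {g : ι → Ω → ℝ} (hg : iIndepFun g μ)
    (hmeas : ∀ i, Measurable (g i)) (w : ι → ℝ) {A : Finset ι} (hA : A.Nonempty)
    (hdist : ∀ a ∈ A, μ.map (g a) = gumbel (w a)) (y : ℝ) :
    μ {ω | y < A.inf' hA (g · ω)} = ENNReal.ofReal (∏ a ∈ A, (1 - gumbelCDF (w a) y)) := by
  rw [hg.measure_lt_inf' hA, ENNReal.ofReal_prod_of_nonneg fun a _ =>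
    sub_nonneg.2 (gumbelCDF_lt_one _ _).le]
  refine Finset.prod_congr rfl fun a ha => ?_
  rw [← gumbel_Ioi, ← hdist a ha, Measure.map_apply (hmeas a) measurableSet_Ioi]
  rfl

end ProbabilityTheory

/-- For independent `g i ~ Gumbel(w i)` and disjoint nonempty finite sets `A`, `B`,
`P(min_{a∈A} g a > max_{b∈B} g b) = ∫_0^1 ∏_{a∈A} (1 − u^{exp(w a − w_B)}) du`
where `w_B = log Σ_{b∈B} exp(w b)`. -/
theorem min_gumbel_gt_max_gumbel_prob
    {Ω : Type*} [MeasureSpace Ω] [IsProbabilityMeasure (ℙ : Measure Ω)]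
    {ι : Type*} [DecidableEq ι] (w : ι → ℝ) (g : ι → Ω → ℝ)
    (A B : Finset ι) (hA : A.Nonempty) (hB : B.Nonempty) (hAB : Disjoint A B)
    (hmeas : ∀ i, Measurable (g i))
    (hindep : iIndepFun g ℙ)
    (hdist : ∀ i ∈ A ∪ B, Measure.map (g i) ℙ = gumbel (w i)) :
    ℙ {ω | B.sup' hB (fun b => g b ω) < A.inf' hA (fun a => g a ω)} =
      ENNReal.ofReal
        (∫ u in (0:ℝ)..1,
          ∏ a ∈ A,
            (1 - u ^ Real.exp (w a - Real.log (∑ b ∈ B, Real.exp (w b))))) := by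
  set wB := Real.log (∑ b ∈ B, Real.exp (w b))
  set f : ℝ → ℝ := fun u => ∏ a ∈ A, (1 - u ^ Real.exp (w a - wB))
  have hf : Continuous f := continuous_finsetProd _ fun a _ =>
    continuous_const.sub (Real.continuous_rpow_const (by positivity))
  have hf_nonneg : ∀ u ∈ Ioo (0 : ℝ) 1, 0 ≤ f u := fun u hu => Finset.prod_nonneg fun a _ =>
    sub_nonneg.2 (Real.rpow_le_one hu.1.le hu.2.le (by positivity))
  have hlawY : Measure.map (fun ω => B.sup' hB (g · ω)) ℙ = gumbel wB :=
    hindep.map_sup'_eq_gumbel hmeas w hB fun b hb => hdist b (Finset.mem_union_right A hb)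
  have hX_gt := hindep.measure_lt_inf'_eq_gumbel hmeas w hA fun a ha =>
    hdist a (Finset.mem_union_left B ha)
  calc ℙ {ω | B.sup' hB (g · ω) < A.inf' hA (g · ω)}
      = ∫⁻ y, ℙ {ω | y < A.inf' hA (g · ω)} ∂Measure.map (fun ω => B.sup' hB (g · ω)) ℙ :=
        (hindep.indepFun_sup'_inf' hmeas hAB.symm hB hA).measure_lt_eq_lintegral
          (Finset.measurable_sup'_apply hB fun b _ => hmeas b)
          (Finset.measurable_inf'_apply hA fun a _ => hmeas a)
    _ = ∫⁻ y, ENNReal.ofReal (f (gumbelCDF wB y)) ∂gumbel wB := by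
        simp_rw [hX_gt, hlawY, f, gumbelCDF_rpow]
    _ = ∫⁻ u in Ioo 0 1, ENNReal.ofReal (f u) := by
        rw [← map_gumbelCDF_gumbel wB]
        exact (lintegral_map (ENNReal.measurable_ofReal.comp hf.measurable)
          (continuous_gumbelCDF wB).measurable).symm
    _ = ENNReal.ofReal (∫ u in (0 : ℝ)..1, f u) :=
        setLIntegral_Ioo_ofReal_eq_intervalIntegral zero_le_one (hf.intervalIntegrable 0 1)
          hf_nonneg
end

section
/- Let S be a finite set, b = exp(w_i + c) > 0 for some i ∈ S, and a = exp(w_i + w_R + 2c) − 1 > b. Define g_0(v) = v^a log v / (1 − v^b) for v ∈ (0,1). Then lim_{v→1⁻} g_0(v) = −1/b, and |g_0(v)| ≤ 1/b for all v ∈ (0,1). -/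
/-!
Writing `t = v ^ b`, we have `log v / (1 - v ^ b) = -(1 / b) · log t / (t - 1)`, a difference
quotient of `log` at `1`; it tends to `-(1 / b) · log' 1 = -1 / b`, while `v ^ a → 1`.
For the bound, `v ^ a ≤ v ^ b` on `(0, 1)` because `b ≤ a`, and `t · (-log t) ≤ 1 - t` is the
inequality `1 - 1 / t ≤ log t`.
-/

open Filter Topology Real

lemma rpow_mul_log_div_one_sub_rpow_eq {v : ℝ} (hv : 0 < v) (a : ℝ) {b : ℝ} (hb : b ≠ 0) :
    v ^ a * log v / (1 - v ^ b) = v ^ a * (-(1 / b) * slope log 1 (v ^ b)) := by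
  rw [slope_def_field, log_rpow hv, log_one, sub_zero, ← neg_sub, div_neg]
  field_simp

lemma tendsto_rpow_nhdsNE_one {b : ℝ} (hb : b ≠ 0) :
    Tendsto (fun v : ℝ => v ^ b) (𝓝[≠] 1) (𝓝[≠] 1) := by
  refine tendsto_nhdsWithin_of_tendsto_nhds_of_eventually_within _ ?_ ?_
  · simpa using (continuousAt_rpow_const 1 b (Or.inl one_ne_zero)).tendsto.mono_left
      nhdsWithin_le_nhds
  · filter_upwards [self_mem_nhdsWithin, nhdsWithin_le_nhds (Ioi_mem_nhds one_pos)]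
      with v (hv1 : v ≠ 1) (hv0 : 0 < v) (hvb : v ^ b = 1)
    have : b * log v = 0 := by rw [← log_rpow hv0, hvb, log_one]
    exact log_ne_zero_of_pos_of_ne_one hv0 hv1 ((mul_eq_zero.mp this).resolve_left hb)

theorem tendsto_rpow_mul_log_div_one_sub_rpow (a : ℝ) {b : ℝ} (hb : b ≠ 0) :
    Tendsto (fun v : ℝ => v ^ a * log v / (1 - v ^ b)) (𝓝[≠] 1) (𝓝 (-(1 / b))) := by
  have hslope : Tendsto (slope log 1) (𝓝[≠] 1) (𝓝 1) := by
    simpa using hasDerivAt_iff_tendsto_slope.mp (hasDerivAt_log one_ne_zero)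
  have hpow : Tendsto (fun v : ℝ => v ^ a) (𝓝[≠] 1) (𝓝 1) := by
    simpa using (continuousAt_rpow_const 1 a (Or.inl one_ne_zero)).tendsto.mono_left
      nhdsWithin_le_nhds
  have hlim := hpow.mul ((tendsto_const_nhds (x := -(1 / b))).mul (hslope.comp (tendsto_rpow_nhdsNE_one hb)))
  rw [one_mul, mul_one] at hlim
  refine hlim.congr' ?_
  filter_upwards [nhdsWithin_le_nhds (Ioi_mem_nhds one_pos)] with v (hv : 0 < v)
  exact (rpow_mul_log_div_one_sub_rpow_eq hv a hb).symm

lemma mul_neg_log_le_one_sub {t : ℝ} (ht : 0 < t) : t * -log t ≤ 1 - t := by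
  have := mul_le_mul_of_nonneg_left (one_sub_inv_le_log_of_pos ht) ht.le
  rw [mul_sub, mul_inv_cancel₀ ht.ne'] at this
  linarith

theorem abs_rpow_mul_log_div_one_sub_rpow_le {v a b : ℝ} (hv : v ∈ Set.Ioo (0 : ℝ) 1)
    (hb : 0 < b) (hba : b ≤ a) :
    |v ^ a * log v / (1 - v ^ b)| ≤ 1 / b := by
  obtain ⟨hv0, hv1⟩ := hv
  have hvb : 0 < v ^ b := rpow_pos_of_pos hv0 b
  have hgap : 0 < 1 - v ^ b := sub_pos.mpr (rpow_lt_one hv0.le hv1 hb)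
  have hlog : 0 < -log v := neg_pos.mpr (log_neg hv0 hv1)
  have hkey : v ^ b * (b * -log v) ≤ 1 - v ^ b := by
    simpa [log_rpow hv0] using mul_neg_log_le_one_sub hvb
  rw [abs_div, abs_of_pos hgap, abs_mul, abs_of_pos (rpow_pos_of_pos hv0 a),
    abs_of_neg (log_neg hv0 hv1), div_le_div_iff₀ hgap hb]
  calc v ^ a * -log v * b ≤ v ^ b * -log v * b := by
        gcongr ?_ * _ * _
        exact rpow_le_rpow_of_exponent_ge hv0 hv1.le hba
    _ = v ^ b * (b * -log v) := by ring
    _ ≤ 1 * (1 - v ^ b) := by linarith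

theorem g0_limit_and_bound_general
    (wi c a b : ℝ)
    (hb : b = Real.exp (wi + c))
    (hba : b < a) :
    Filter.Tendsto (fun v : ℝ => v ^ a * Real.log v / (1 - v ^ b))
        (nhdsWithin 1 (Set.Iio 1)) (nhds (-(1 / b))) ∧
      ∀ v ∈ Set.Ioo (0:ℝ) 1, |v ^ a * Real.log v / (1 - v ^ b)| ≤ 1 / b := by
  have hb0 : 0 < b := hb ▸ exp_pos _
  exact ⟨(tendsto_rpow_mul_log_div_one_sub_rpow a hb0.ne').mono_left
      (nhdsWithin_mono _ fun _ hv => ne_of_lt hv),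
    fun v hv => abs_rpow_mul_log_div_one_sub_rpow_le hv hb0 hba.le⟩

/-- Let `b = exp(w_i + c) > 0` and `a = exp(w_i + w_R + 2c) − 1 > b`, and define
`g₀(v) = v^a log v / (1 − v^b)` on `(0,1)`. Then `g₀(v) → −1/b` as `v → 1⁻`,
and `|g₀(v)| ≤ 1/b` for all `v ∈ (0,1)`. -/
theorem g0_limit_and_bound
    (wi wR c a b : ℝ)
    (hb : b = Real.exp (wi + c))
    (ha : a = Real.exp (wi + wR + 2 * c) - 1)
    (hba : b < a) :
    Filter.Tendsto (fun v : ℝ => v ^ a * Real.log v / (1 - v ^ b))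
        (nhdsWithin 1 (Set.Iio 1)) (nhds (-(1 / b))) ∧
      ∀ v ∈ Set.Ioo (0:ℝ) 1, |v ^ a * Real.log v / (1 - v ^ b)| ≤ 1 / b :=
  g0_limit_and_bound_general wi c a b hb hba
end

section
/- Discretization error for the likelihood integral (Theorem 1(a)): assume constants c ∈ ℝ and C > 1 such that 2 < exp(w_{R_m} + c) < C for all m, and exp(w_i + c) ≤ C for all i. Then for any ε > 0 and each m, the composite midpoint rule with T ≥ C^2 (n_m + 1) / (2√3 ε) intervals approximates I_m = exp(w_{R_{m+1}} + c) ∫_0^1 v^{exp(w_{R_{m+1}}+c)−1} ∏_{i∈S_m} (1 − v^{exp(w_i + c)}) dv with total discretization error at most ε, where the error accounts for truncating the integral to [δ, 1] with δ = (ε/C)^{1/2} and applying the midpoint rule on [δ, 1]. -/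
/-!
Split `∫₀¹` at `δ = √(ε / C)`. On `[0, δ]` the integrand lies between `0` and `C v`, so that
piece is at most `C δ² / 2 = ε / 2`. On `[δ, 1]` every factor `v ^ p` with `0 ≤ p ≤ C` satisfies
`|f| ≤ 1`, `|f'| ≤ C / δ`, `|f''| ≤ (C / δ)²`; this normalisation survives products with the
scales adding up, so the integrand has `|F''| ≤ C ((n + 1) C / δ)² = C⁴ (n + 1)² / ε`, and the
midpoint rule error `sup |F''| / (24 T²)` is at most `ε / 2` by the choice of `T`. On one cell the
midpoint error is `∫₀ʳ (f (m + t) + f (m - t) - 2 f m) dt`, whose integrand is at most `M t²`.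
-/

/-- The composite midpoint rule with `T` equal subintervals for `∫_{x0}^{x1} f`. -/
noncomputable def midpointApprox (f : ℝ → ℝ) (x0 x1 : ℝ) (T : ℕ) : ℝ :=
  ((x1 - x0) / T) *
    ∑ k ∈ Finset.range T, f (x0 + ((k : ℝ) + 1 / 2) * ((x1 - x0) / T))

open Set intervalIntegral MeasureTheory

section MidpointRule

variable {f f' f'' : ℝ → ℝ} {m r M : ℝ}

theorem abs_symmetric_second_difference_le
    (hf : ∀ x ∈ Icc (m - r) (m + r), HasDerivAt f (f' x) x)
    (hf' : ∀ x ∈ Icc (m - r) (m + r), HasDerivAt f' (f'' x) x)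
    (hM : ∀ x ∈ Icc (m - r) (m + r), |f'' x| ≤ M) {t : ℝ} (ht : t ∈ Icc 0 r) :
    |f (m + t) + f (m - t) - 2 * f m| ≤ M * t ^ 2 := by
  have hmem : ∀ s ∈ Icc 0 r, m + s ∈ Icc (m - r) (m + r) ∧ m - s ∈ Icc (m - r) (m + r) :=
    fun s ⟨hs0, hsr⟩ => ⟨⟨by linarith, by linarith⟩, ⟨by linarith, by linarith⟩⟩
  have hderiv : ∀ s ∈ Icc 0 r, HasDerivAt (fun s => f (m + s) + f (m - s) - 2 * f m)
      (f' (m + s) - f' (m - s)) s := fun s hs =>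
    (((hf _ (hmem s hs).1).comp_const_add m s).add
      ((hf _ (hmem s hs).2).comp_const_sub m s)).sub_const _
  have hlip : ∀ s ∈ Icc 0 r, ‖f' (m + s) - f' (m - s)‖ ≤ M * (2 * s) := fun s hs => by
    have := (convex_Icc (m - r) (m + r)).norm_image_sub_le_of_norm_hasDerivWithin_le
      (fun x hx => (hf' x hx).hasDerivWithinAt) (fun x hx => hM x hx) (hmem s hs).2 (hmem s hs).1
    rwa [Real.norm_of_nonneg (by linarith [hs.1] : 0 ≤ m + s - (m - s)),
      show m + s - (m - s) = 2 * s by ring] at this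
  exact image_norm_le_of_norm_deriv_right_le_deriv_boundary (B := fun s => M * s ^ 2)
    (B' := fun s => M * (2 * s))
    (fun s hs => (hderiv s hs).continuousAt.continuousWithinAt)
    (fun s hs => (hderiv s (Ico_subset_Icc_self hs)).hasDerivWithinAt) (by simp [two_mul])
    (fun s => by simpa using (hasDerivAt_pow 2 s).const_mul M)
    (fun s hs => hlip s (Ico_subset_Icc_self hs)) ht

theorem abs_integral_sub_midpoint_le (hr : 0 ≤ r)
    (hf : ∀ x ∈ Icc (m - r) (m + r), HasDerivAt f (f' x) x)
    (hf' : ∀ x ∈ Icc (m - r) (m + r), HasDerivAt f' (f'' x) x)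
    (hM : ∀ x ∈ Icc (m - r) (m + r), |f'' x| ≤ M) :
    |(∫ x in m - r..m + r, f x) - 2 * r * f m| ≤ M * r ^ 3 / 3 := by
  have hcont : ContinuousOn f (Icc (m - r) (m + r)) :=
    fun x hx => (hf x hx).continuousAt.continuousWithinAt
  have hleft : IntervalIntegrable (fun t => f (m - t)) volume 0 r :=
    (hcont.comp (by fun_prop) fun t ht => ⟨by linarith [ht.2], by linarith [ht.1]⟩
      ).intervalIntegrable_of_Icc hr
  have hright : IntervalIntegrable (fun t => f (m + t)) volume 0 r :=
    (hcont.comp (by fun_prop) fun t ht => ⟨by linarith [ht.1], by linarith [ht.2]⟩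
      ).intervalIntegrable_of_Icc hr
  have hfold : (∫ x in m - r..m + r, f x) - 2 * r * f m =
      ∫ t in 0..r, (f (m + t) + f (m - t) - 2 * f m) := by
    have hpiece : ∀ {u v}, m - r ≤ u → u ≤ v → v ≤ m + r → IntervalIntegrable f volume u v :=
      fun hu huv hv => (hcont.mono (Icc_subset_Icc hu hv)).intervalIntegrable_of_Icc huv
    rw [← integral_add_adjacent_intervals (b := m) (hpiece le_rfl (by linarith) (by linarith))
        (hpiece (by linarith) (by linarith) le_rfl),
      integral_sub (hright.add hleft) intervalIntegrable_const,
      integral_add hright hleft, integral_comp_add_left, integral_comp_sub_left]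
    simp only [add_zero, sub_zero, intervalIntegral.integral_const, smul_eq_mul]
    ring
  rw [hfold, ← Real.norm_eq_abs]
  calc ‖∫ t in 0..r, (f (m + t) + f (m - t) - 2 * f m)‖
      ≤ ∫ t in 0..r, M * t ^ 2 :=
        norm_integral_le_of_norm_le hr (ae_of_all _ fun t ht =>
          abs_symmetric_second_difference_le hf hf' hM (Ioc_subset_Icc_self ht))
          ((continuous_const.mul (continuous_pow 2)).intervalIntegrable 0 r)
    _ = M * r ^ 3 / 3 := by rw [intervalIntegral.integral_const_mul, integral_pow]; ring

theorem abs_integral_sub_midpointApprox_le {a b : ℝ} {T : ℕ} (hT : 0 < T) (hab : a ≤ b)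
    (hf : ∀ x ∈ Icc a b, HasDerivAt f (f' x) x)
    (hf' : ∀ x ∈ Icc a b, HasDerivAt f' (f'' x) x)
    (hM : ∀ x ∈ Icc a b, |f'' x| ≤ M) :
    |(∫ x in a..b, f x) - midpointApprox f a b T| ≤ M * (b - a) ^ 3 / (24 * T ^ 2) := by
  set h := (b - a) / T with hh
  have hT' : (0 : ℝ) < T := by exact_mod_cast hT
  have hh0 : 0 ≤ h := div_nonneg (by linarith) hT'.le
  set node : ℕ → ℝ := fun k => a + k * h
  have hnode_T : node T = b := by simp only [node, hh]; field_simp; ring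
  have hcell : ∀ k < T, Icc (node k) (node (k + 1)) ⊆ Icc a b := fun k hk => by
    have hk' : (k : ℝ) + 1 ≤ T := by exact_mod_cast hk
    refine Icc_subset_Icc ?_ (hnode_T ▸ ?_) <;> simp only [node] <;> push_cast <;> nlinarith
  have hcell_mid : ∀ k : ℕ, a + (k + 1 / 2) * h - h / 2 = node k ∧
      a + (k + 1 / 2) * h + h / 2 = node (k + 1) := fun k => by
    simp only [node]; push_cast; constructor <;> ring
  have hsum : (∫ x in a..b, f x) = ∑ k ∈ Finset.range T, ∫ x in node k..node (k + 1), f x := by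
    rw [intervalIntegral.sum_integral_adjacent_intervals, hnode_T]
    · simp [node]
    · intro k hk
      refine ContinuousOn.intervalIntegrable_of_Icc (by simp only [node]; push_cast; nlinarith)
        fun x hx => (hf x (hcell k hk hx)).continuousAt.continuousWithinAt
  rw [hsum, midpointApprox, Finset.mul_sum, ← Finset.sum_sub_distrib]
  calc |∑ k ∈ Finset.range T, ((∫ x in node k..node (k + 1), f x) - h * f (a + (k + 1 / 2) * h))|
      ≤ ∑ k ∈ Finset.range T, M * (h / 2) ^ 3 / 3 := by
        refine (Finset.abs_sum_le_sum_abs _ _).trans (Finset.sum_le_sum fun k hk => ?_)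
        have hsub : Icc (a + (k + 1 / 2) * h - h / 2) (a + (k + 1 / 2) * h + h / 2) ⊆ Icc a b := by
          rw [(hcell_mid k).1, (hcell_mid k).2]
          exact hcell k (Finset.mem_range.mp hk)
        have := abs_integral_sub_midpoint_le (by positivity) (fun x hx => hf x (hsub hx))
          (fun x hx => hf' x (hsub hx)) (fun x hx => hM x (hsub hx))
        rwa [(hcell_mid k).1, (hcell_mid k).2, show 2 * (h / 2) = h by ring] at this
    _ = M * (b - a) ^ 3 / (24 * T ^ 2) := by
        rw [Finset.sum_const, Finset.card_range, nsmul_eq_mul, hh]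
        field_simp
        ring

end MidpointRule

def HasDerivBoundsOn (f : ℝ → ℝ) (s : Set ℝ) (A : ℝ) : Prop :=
  ∃ f' f'' : ℝ → ℝ, ∀ x ∈ s, HasDerivAt f (f' x) x ∧ HasDerivAt f' (f'' x) x ∧
    |f x| ≤ 1 ∧ |f' x| ≤ A ∧ |f'' x| ≤ A ^ 2

namespace HasDerivBoundsOn

variable {f g : ℝ → ℝ} {s : Set ℝ} {A B : ℝ}

theorem one_sub (hf : HasDerivBoundsOn f s A) (hf0 : ∀ x ∈ s, 0 ≤ f x) :
    HasDerivBoundsOn (fun x => 1 - f x) s A := by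
  obtain ⟨f', f'', hf⟩ := hf
  refine ⟨fun x => -f' x, fun x => -f'' x, fun x hx => ?_⟩
  obtain ⟨df, df', hf0', hf1, hf2⟩ := hf x hx
  refine ⟨df.const_sub 1, df'.neg, abs_le.mpr ⟨?_, ?_⟩, by rwa [abs_neg], by rwa [abs_neg]⟩ <;>
    linarith [hf0 x hx, (abs_le.mp hf0').2]

theorem mul (hf : HasDerivBoundsOn f s A) (hg : HasDerivBoundsOn g s B) :
    HasDerivBoundsOn (fun x => f x * g x) s (A + B) := by
  obtain ⟨f', f'', hf⟩ := hf
  obtain ⟨g', g'', hg⟩ := hg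
  refine ⟨fun x => f' x * g x + f x * g' x, fun x => f'' x * g x + 2 * (f' x * g' x) + f x * g'' x,
    fun x hx => ?_⟩
  obtain ⟨df, df', hf0, hf1, hf2⟩ := hf x hx
  obtain ⟨dg, dg', hg0, hg1, hg2⟩ := hg x hx
  have hA : 0 ≤ A := (abs_nonneg _).trans hf1
  have hB : 0 ≤ B := (abs_nonneg _).trans hg1
  refine ⟨df.mul dg, ((df'.mul dg).add (df.mul dg')).congr_deriv (by ring), ?_, ?_, ?_⟩
  · rw [abs_mul]
    exact mul_le_one₀ hf0 (abs_nonneg _) hg0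
  · calc |f' x * g x + f x * g' x| ≤ |f' x| * |g x| + |f x| * |g' x| := by
          simpa only [abs_mul] using abs_add_le (f' x * g x) (f x * g' x)
      _ ≤ A * 1 + 1 * B := by gcongr
      _ = A + B := by ring
  · calc |f'' x * g x + 2 * (f' x * g' x) + f x * g'' x|
        ≤ |f'' x| * |g x| + 2 * (|f' x| * |g' x|) + |f x| * |g'' x| := by
          simpa only [abs_mul, abs_two] using
            abs_add_three (f'' x * g x) (2 * (f' x * g' x)) (f x * g'' x)
      _ ≤ A ^ 2 * 1 + 2 * (A * B) + 1 * B ^ 2 := by gcongr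
      _ = (A + B) ^ 2 := by ring

theorem finset_prod {ι : Type*} {t : Finset ι} {f : ι → ℝ → ℝ} {A : ι → ℝ}
    (hf : ∀ i ∈ t, HasDerivBoundsOn (f i) s (A i)) :
    HasDerivBoundsOn (fun x => ∏ i ∈ t, f i x) s (∑ i ∈ t, A i) := by
  classical
  induction t using Finset.induction_on with
  | empty =>
    exact ⟨fun _ => 0, fun _ => 0, fun x _ => by simp [hasDerivAt_const]⟩
  | insert i t hi ih =>
    simp only [Finset.prod_insert hi, Finset.sum_insert hi]
    exact (hf i (Finset.mem_insert_self i t)).mul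
      (ih fun j hj => hf j (Finset.mem_insert_of_mem hj))

end HasDerivBoundsOn

theorem rpow_le_inv_pow_of_mem_Icc {δ x p : ℝ} {n : ℕ} (hδ : 0 < δ) (hx : x ∈ Icc δ 1)
    (hp : -(n : ℝ) ≤ p) : x ^ p ≤ (δ ^ n)⁻¹ := by
  have hx0 : 0 < x := hδ.trans_le hx.1
  calc x ^ p ≤ x ^ (-(n : ℝ)) := Real.rpow_le_rpow_of_exponent_ge hx0 hx.2 hp
    _ = (x ^ n)⁻¹ := by rw [Real.rpow_neg hx0.le, Real.rpow_natCast]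
    _ ≤ (δ ^ n)⁻¹ := by gcongr; exact hx.1

theorem hasDerivBoundsOn_rpow {p C δ : ℝ} (hδ : 0 < δ) (hp : 0 ≤ p) (hpC : p ≤ C) (hC : 1 ≤ C) :
    HasDerivBoundsOn (fun x => x ^ p) (Icc δ 1) (C / δ) := by
  refine ⟨fun x => p * x ^ (p - 1), fun x => p * ((p - 1) * x ^ (p - 2)), fun x hx => ?_⟩
  have hx0 : 0 < x := hδ.trans_le hx.1
  have hp1 : |p - 1| ≤ C := abs_le.mpr ⟨by linarith, by linarith⟩
  refine ⟨Real.hasDerivAt_rpow_const (Or.inl hx0.ne'), ?_, ?_, ?_, ?_⟩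
  · have := (Real.hasDerivAt_rpow_const (p := p - 1) (Or.inl hx0.ne')).const_mul p
    rwa [sub_sub, one_add_one_eq_two] at this
  · rw [abs_of_nonneg (by positivity)]
    exact Real.rpow_le_one hx0.le hx.2 hp
  · rw [abs_mul, abs_of_nonneg hp, abs_of_nonneg (Real.rpow_nonneg hx0.le _), div_eq_mul_inv]
    gcongr
    simpa using rpow_le_inv_pow_of_mem_Icc (n := 1) hδ hx (by push_cast; linarith)
  · rw [abs_mul, abs_mul, abs_of_nonneg hp, abs_of_nonneg (Real.rpow_nonneg hx0.le _), div_pow,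
      div_eq_mul_inv, sq, mul_assoc]
    gcongr
    exact rpow_le_inv_pow_of_mem_Icc hδ hx (by push_cast; linarith)

noncomputable def likelihoodIntegrand {ι : Type*} (S : Finset ι) (b : ι → ℝ) (β v : ℝ) : ℝ :=
  β * (v ^ (β - 1) * ∏ i ∈ S, (1 - v ^ b i))

section Likelihood

variable {ι : Type*} {S : Finset ι} {b : ι → ℝ} {β C δ : ℝ}

theorem continuous_likelihoodIntegrand (hβ : 1 ≤ β) (hb : ∀ i ∈ S, 0 ≤ b i) :
    Continuous (likelihoodIntegrand S b β) :=
  continuous_const.mul ((Real.continuous_rpow_const (by linarith)).mul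
    (continuous_finsetProd S fun i hi =>
      continuous_const.sub (Real.continuous_rpow_const (hb i hi))))

theorem likelihoodIntegrand_mem_Icc (hβ : 2 ≤ β) (hβC : β ≤ C) (hb : ∀ i ∈ S, 0 ≤ b i)
    {v : ℝ} (hv : v ∈ Icc 0 1) : likelihoodIntegrand S b β v ∈ Icc 0 (C * v) := by
  obtain ⟨hv0, hv1⟩ := hv
  have hfac : ∀ i ∈ S, 0 ≤ 1 - v ^ b i ∧ 1 - v ^ b i ≤ 1 := fun i hi =>
    ⟨sub_nonneg.mpr (Real.rpow_le_one hv0 hv1 (hb i hi)), by linarith [Real.rpow_nonneg hv0 (b i)]⟩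
  have hP0 : 0 ≤ ∏ i ∈ S, (1 - v ^ b i) := Finset.prod_nonneg fun i hi => (hfac i hi).1
  have hP1 : ∏ i ∈ S, (1 - v ^ b i) ≤ 1 :=
    Finset.prod_le_one (fun i hi => (hfac i hi).1) fun i hi => (hfac i hi).2
  have hpow : v ^ (β - 1) ≤ v := by
    simpa using Real.rpow_le_rpow_of_exponent_ge' hv0 hv1 zero_le_one (by linarith : 1 ≤ β - 1)
  have hpow0 : 0 ≤ v ^ (β - 1) := Real.rpow_nonneg hv0 _
  refine ⟨by unfold likelihoodIntegrand; positivity, ?_⟩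
  calc likelihoodIntegrand S b β v ≤ C * (v * 1) := by unfold likelihoodIntegrand; gcongr; linarith
    _ = C * v := by ring

theorem abs_integral_likelihoodIntegrand_le (hβ : 2 ≤ β) (hβC : β ≤ C) (hb : ∀ i ∈ S, 0 ≤ b i)
    (hδ : 0 ≤ δ) (hδ1 : δ ≤ 1) : |∫ v in 0..δ, likelihoodIntegrand S b β v| ≤ C * δ ^ 2 / 2 := by
  have hmem : ∀ v ∈ Icc 0 δ, likelihoodIntegrand S b β v ∈ Icc 0 (C * v) := fun v hv =>
    likelihoodIntegrand_mem_Icc hβ hβC hb ⟨hv.1, hv.2.trans hδ1⟩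
  rw [abs_of_nonneg (intervalIntegral.integral_nonneg hδ fun v hv => (hmem v hv).1)]
  calc (∫ v in 0..δ, likelihoodIntegrand S b β v) ≤ ∫ v in 0..δ, C * v :=
        intervalIntegral.integral_mono_on hδ
          ((continuous_likelihoodIntegrand (by linarith) hb).intervalIntegrable _ _)
          ((continuous_const.mul continuous_id).intervalIntegrable _ _) fun v hv => (hmem v hv).2
    _ = C * δ ^ 2 / 2 := by rw [intervalIntegral.integral_const_mul, integral_id]; ring

theorem hasDerivBoundsOn_rpow_mul_prod_one_sub_rpow (hβ : 1 ≤ β) (hβC : β ≤ C + 1) (hC : 1 ≤ C)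
    (hb : ∀ i ∈ S, 0 ≤ b i ∧ b i ≤ C) (hδ : 0 < δ) :
    HasDerivBoundsOn (fun v => v ^ (β - 1) * ∏ i ∈ S, (1 - v ^ b i)) (Icc δ 1)
      ((S.card + 1) * (C / δ)) := by
  have := (hasDerivBoundsOn_rpow (p := β - 1) hδ (by linarith) (by linarith) hC).mul
    (HasDerivBoundsOn.finset_prod fun i hi =>
      (hasDerivBoundsOn_rpow hδ (hb i hi).1 (hb i hi).2 hC).one_sub
        fun v hv => Real.rpow_nonneg (hδ.le.trans hv.1) _)
  rwa [Finset.sum_const, nsmul_eq_mul, ← one_add_mul, add_comm] at this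

theorem abs_integral_sub_midpointApprox_likelihoodIntegrand_le {T : ℕ} (hT : 0 < T)
    (hβ : 2 ≤ β) (hβC : β ≤ C) (hb : ∀ i ∈ S, 0 ≤ b i ∧ b i ≤ C) (hδ : 0 < δ) (hδ1 : δ ≤ 1) :
    |(∫ v in δ..1, likelihoodIntegrand S b β v) - midpointApprox (likelihoodIntegrand S b β) δ 1 T|
      ≤ C * ((S.card + 1) * (C / δ)) ^ 2 / (24 * T ^ 2) := by
  obtain ⟨g', g'', hg⟩ := hasDerivBoundsOn_rpow_mul_prod_one_sub_rpow (β := β) (by linarith)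
    (by linarith) (by linarith) hb hδ
  set A := ((S.card : ℝ) + 1) * (C / δ)
  refine (abs_integral_sub_midpointApprox_le (f := likelihoodIntegrand S b β)
    (f' := fun x => β * g' x) (f'' := fun x => β * g'' x) (M := C * A ^ 2) hT hδ1
    (fun x hx => (hg x hx).1.const_mul β) (fun x hx => (hg x hx).2.1.const_mul β)
    fun x hx => ?_).trans ?_
  · rw [abs_mul, abs_of_nonneg (by linarith)]
    exact mul_le_mul hβC (hg x hx).2.2.2.2 (abs_nonneg _) (by linarith)
  · have hδ3 : (1 - δ) ^ 3 ≤ 1 := pow_le_one₀ (by linarith) (by linarith)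
    have hCA : 0 ≤ C * A ^ 2 := mul_nonneg (by linarith) (sq_nonneg A)
    exact div_le_div_of_nonneg_right (mul_le_of_le_one_right hCA hδ3) (by positivity)

end Likelihood

theorem likelihood_midpoint_error_bound_le_half {n C ε δ : ℝ} {T : ℕ} (hC : 0 < C) (hε : 0 < ε) (hn : 0 ≤ n)
    (hδsq : δ ^ 2 = ε / C) (hT : C ^ 2 * (n + 1) / (2 * √3 * ε) ≤ T) :
    C * ((n + 1) * (C / δ)) ^ 2 / (24 * T ^ 2) ≤ ε / 2 := by
  have hTsq : (C ^ 2 * (n + 1)) ^ 2 ≤ 12 * ε ^ 2 * T ^ 2 :=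
    calc (C ^ 2 * (n + 1)) ^ 2 ≤ (T * (2 * √3 * ε)) ^ 2 :=
          pow_le_pow_left₀ (by positivity) ((div_le_iff₀ (by positivity)).mp hT) 2
      _ = 12 * ε ^ 2 * T ^ 2 := by
          rw [mul_pow, mul_pow, mul_pow, Real.sq_sqrt (by norm_num)]; ring
  have hT0 : (0 : ℝ) < T := lt_of_lt_of_le (by positivity) hT
  rw [mul_pow, div_pow, hδsq, div_le_iff₀ (by positivity)]
  field_simp
  nlinarith

theorem likelihood_integral_discretization_error_general
    {ι : Type*} (S : Finset ι) (w : ι → ℝ) (wR c C ε : ℝ) (T : ℕ)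
    (hβ2 : 2 < Real.exp (wR + c)) (hβC : Real.exp (wR + c) < C)
    (hb : ∀ i ∈ S, Real.exp (w i + c) ≤ C)
    (hε : 0 < ε) (hεC : ε < C) (hT0 : 0 < T)
    (hT : C ^ 2 * ((S.card : ℝ) + 1) / (2 * Real.sqrt 3 * ε) ≤ (T : ℝ)) :
    |Real.exp (wR + c) *
        (∫ v in (0:ℝ)..1,
          v ^ (Real.exp (wR + c) - 1) *
            ∏ i ∈ S, (1 - v ^ Real.exp (w i + c))) -
      midpointApprox
        (fun v =>
          Real.exp (wR + c) *
            (v ^ (Real.exp (wR + c) - 1) *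
              ∏ i ∈ S, (1 - v ^ Real.exp (w i + c))))
        ((ε / C) ^ ((1:ℝ) / 2)) 1 T| ≤ ε := by
  set β := Real.exp (wR + c)
  set b : ι → ℝ := fun i => Real.exp (w i + c)
  set F := likelihoodIntegrand S b β
  set δ := (ε / C) ^ ((1:ℝ) / 2)
  have hC : 0 < C := by linarith
  have hb' : ∀ i ∈ S, 0 ≤ b i ∧ b i ≤ C := fun i hi => ⟨(Real.exp_pos _).le, hb i hi⟩
  have hδ : δ = √(ε / C) := (Real.sqrt_eq_rpow _).symm
  have hδsq : δ ^ 2 = ε / C := by rw [hδ, Real.sq_sqrt (by positivity)]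
  have hδ0 : 0 < δ := by rw [hδ]; positivity
  have hδ1 : δ ≤ 1 := by rw [hδ, Real.sqrt_le_one, div_le_one hC]; exact hεC.le
  have hsplit : β * (∫ v in (0:ℝ)..1, v ^ (β - 1) * ∏ i ∈ S, (1 - v ^ b i)) =
      (∫ v in 0..δ, F v) + ∫ v in δ..1, F v := by
    have hF : Continuous F :=
      continuous_likelihoodIntegrand (by linarith) fun i hi => (hb' i hi).1
    rw [← intervalIntegral.integral_const_mul, intervalIntegral.integral_add_adjacent_intervals
      (hF.intervalIntegrable _ _) (hF.intervalIntegrable _ _)]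
    rfl
  have htrunc : |∫ v in 0..δ, F v| ≤ ε / 2 := by
    refine (abs_integral_likelihoodIntegrand_le hβ2.le hβC.le (fun i hi => (hb' i hi).1) hδ0.le
      hδ1).trans_eq ?_
    rw [hδsq]; field_simp
  have hmid : |(∫ v in δ..1, F v) - midpointApprox F δ 1 T| ≤ ε / 2 :=
    (abs_integral_sub_midpointApprox_likelihoodIntegrand_le hT0 hβ2.le hβC.le hb' hδ0 hδ1).trans
      (likelihood_midpoint_error_bound_le_half hC hε (by positivity) hδsq hT)
  calc _ = |(∫ v in 0..δ, F v) + ((∫ v in δ..1, F v) - midpointApprox F δ 1 T)| := by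
        rw [hsplit, add_sub_assoc]
        rfl
    _ ≤ ε / 2 + ε / 2 := (abs_add_le _ _).trans (add_le_add htrunc hmid)
    _ = ε := add_halves ε

/-- Theorem 1(a): discretization error for the likelihood integral. Assume
`2 < exp(w_R + c) < C` and `exp(w i + c) ≤ C` for `i ∈ S`, with `C > 1`. Then
for `0 < ε < C`, approximating
`I = exp(w_R + c) ∫_0^1 v^{exp(w_R+c)−1} ∏_{i∈S} (1 − v^{exp(w i + c)}) dv`
by the composite midpoint rule on `[δ, 1]` with `δ = (ε/C)^{1/2}` and
`T ≥ C² (n+1) / (2√3 ε)` intervals (where `n = |S|`) incurs a total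
discretization error at most `ε`. -/
theorem likelihood_integral_discretization_error
    {ι : Type*} (S : Finset ι) (w : ι → ℝ) (wR c C ε : ℝ) (T : ℕ)
    (hC : 1 < C)
    (hβ2 : 2 < Real.exp (wR + c)) (hβC : Real.exp (wR + c) < C)
    (hb : ∀ i ∈ S, Real.exp (w i + c) ≤ C)
    (hε : 0 < ε) (hεC : ε < C) (hT0 : 0 < T)
    (hT : C ^ 2 * ((S.card : ℝ) + 1) / (2 * Real.sqrt 3 * ε) ≤ (T : ℝ)) :
    |Real.exp (wR + c) *
        (∫ v in (0:ℝ)..1,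
          v ^ (Real.exp (wR + c) - 1) *
            ∏ i ∈ S, (1 - v ^ Real.exp (w i + c))) -
      midpointApprox
        (fun v =>
          Real.exp (wR + c) *
            (v ^ (Real.exp (wR + c) - 1) *
              ∏ i ∈ S, (1 - v ^ Real.exp (w i + c))))
        ((ε / C) ^ ((1:ℝ) / 2)) 1 T| ≤ ε :=
  likelihood_integral_discretization_error_general S w wR c C ε T hβ2 hβC hb hε hεC hT0 hT
end
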